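/- arXiv:2604.19535 — 4 statements merged into one kernel-verified Lean document; each statement's English description precedes it below -/
import Mathlib

section
/- (Lions' sub-additivity lemma) Let ρ > 0 and let F : [0,ρ] → ℝ satisfy F(θη) ≤ θ F(η) for all η ∈ (0,ρ) and all θ ∈ (1, ρ/η]. Then F(ρ) ≤ F(η) + F(ρ−η) for all η ∈ (0,ρ). Moreover, if η₀ ∈ (0,ρ) satisfies the strict inequality F(θη₀) < θ F(η₀) for all θ ∈ (1, ρ/η₀], then F(ρ) < F(η₀) + F(ρ−η₀). -/
/-!
Choosing the largest admissible dilation `θ = ρ / η` turns the hypothesis into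
`F ρ / ρ ≤ F η / η` for every `η ∈ (0, ρ)`. Writing `F ρ` as the convex combination
`(η / ρ) F ρ + ((ρ - η) / ρ) F ρ` and bounding the two terms by `F η` and `F (ρ - η)`
gives sub-additivity, strictly as soon as the first bound is strict.
-/

section

variable {F : ℝ → ℝ} {η ρ : ℝ}

theorem mul_apply_le_of_apply_div_mul_le (hη : 0 < η) (h : F (ρ / η * η) ≤ ρ / η * F η) :
    η * F ρ ≤ ρ * F η := by
  rw [div_mul_cancel₀ _ hη.ne'] at h
  calc η * F ρ ≤ η * (ρ / η * F η) := mul_le_mul_of_nonneg_left h hη.le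
    _ = ρ * F η := by field_simp

theorem mul_apply_lt_of_apply_div_mul_lt (hη : 0 < η) (h : F (ρ / η * η) < ρ / η * F η) :
    η * F ρ < ρ * F η := by
  rw [div_mul_cancel₀ _ hη.ne'] at h
  calc η * F ρ < η * (ρ / η * F η) := mul_lt_mul_of_pos_left h hη
    _ = ρ * F η := by field_simp

end

section

variable {η ρ x y z : ℝ}

theorem le_add_of_mul_le_of_sub_mul_le (hη : 0 < η) (hηρ : η < ρ) (hy : η * x ≤ ρ * y)
    (hz : (ρ - η) * x ≤ ρ * z) : x ≤ y + z :=
  le_of_mul_le_mul_left (by linarith : ρ * x ≤ ρ * (y + z)) (by linarith)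

theorem lt_add_of_mul_lt_of_sub_mul_le (hη : 0 < η) (hηρ : η < ρ) (hy : η * x < ρ * y)
    (hz : (ρ - η) * x ≤ ρ * z) : x < y + z :=
  lt_of_mul_lt_mul_left (by linarith : ρ * x < ρ * (y + z)) (by linarith)

end

theorem lions_subadditivity_general (ρ : ℝ) (F : ℝ → ℝ)
    (h : ∀ η ∈ Set.Ioo 0 ρ, ∀ θ ∈ Set.Ioc 1 (ρ / η), F (θ * η) ≤ θ * F η) :
    (∀ η ∈ Set.Ioo 0 ρ, F ρ ≤ F η + F (ρ - η)) ∧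
    (∀ η₀ ∈ Set.Ioo 0 ρ,
      (∀ θ ∈ Set.Ioc 1 (ρ / η₀), F (θ * η₀) < θ * F η₀) →
      F ρ < F η₀ + F (ρ - η₀)) := by
  have dilation_mem : ∀ η ∈ Set.Ioo 0 ρ, ρ / η ∈ Set.Ioc 1 (ρ / η) := fun η hη =>
    ⟨(one_lt_div hη.1).2 hη.2, le_rfl⟩
  have mul_le : ∀ η ∈ Set.Ioo 0 ρ, η * F ρ ≤ ρ * F η := fun η hη =>
    mul_apply_le_of_apply_div_mul_le hη.1 (h η hη _ (dilation_mem η hη))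
  have sub_mem : ∀ η ∈ Set.Ioo 0 ρ, ρ - η ∈ Set.Ioo 0 ρ := fun η hη =>
    ⟨sub_pos.2 hη.2, sub_lt_self ρ hη.1⟩
  refine ⟨fun η hη => ?_, fun η₀ hη₀ hstrict => ?_⟩
  · exact le_add_of_mul_le_of_sub_mul_le hη.1 hη.2 (mul_le η hη) (mul_le _ (sub_mem η hη))
  · exact lt_add_of_mul_lt_of_sub_mul_le hη₀.1 hη₀.2
      (mul_apply_lt_of_apply_div_mul_lt hη₀.1 (hstrict _ (dilation_mem η₀ hη₀)))
      (mul_le _ (sub_mem η₀ hη₀))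

/-- Lions' sub-additivity lemma. -/
theorem lions_subadditivity (ρ : ℝ) (hρ : 0 < ρ) (F : ℝ → ℝ)
    (h : ∀ η ∈ Set.Ioo 0 ρ, ∀ θ ∈ Set.Ioc 1 (ρ / η), F (θ * η) ≤ θ * F η) :
    (∀ η ∈ Set.Ioo 0 ρ, F ρ ≤ F η + F (ρ - η)) ∧
    (∀ η₀ ∈ Set.Ioo 0 ρ,
      (∀ θ ∈ Set.Ioc 1 (ρ / η₀), F (θ * η₀) < θ * F η₀) →
      F ρ < F η₀ + F (ρ - η₀)) :=
  lions_subadditivity_general ρ F h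
end

section
/- Let ν > 0 and let E^lin be as above, with mass M(u₊,u₋) = ‖u₊‖²_{L²} + ‖u₋‖²_{L²}. Then for every (u₊,u₋) ∈ H¹(ℝ²;ℂ)×H¹(ℝ²;ℂ) one has E^lin(u₊,u₋) + (ν²/4) M(u₊,u₋) ≥ 0. -/
open MeasureTheory Complex

noncomputable section

/-- Points of the plane. -/
abbrev Pt := ℝ × ℝ

/-- Partial derivative in `x`. -/
def px (u : Pt → ℂ) (z : Pt) : ℂ := fderiv ℝ u z (1, 0)

/-- Partial derivative in `y`. -/
def py (u : Pt → ℂ) (z : Pt) : ℂ := fderiv ℝ u z (0, 1)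

/-- `D⁺ = ∂ₓ + i ∂_y`. -/
def Dp (u : Pt → ℂ) (z : Pt) : ℂ := px u z + Complex.I * py u z

/-- `D⁻ = ∂ₓ - i ∂_y`. -/
def Dm (u : Pt → ℂ) (z : Pt) : ℂ := px u z - Complex.I * py u z

/-- The Laplacian `Δ = ∂ₓ² + ∂_y²`. -/
def lap (u : Pt → ℂ) (z : Pt) : ℂ := px (px u) z + py (py u) z

/-- Membership in `H¹(ℝ²;ℂ)` (differentiable with function and partial derivatives in `L²`). -/
def H1 (u : Pt → ℂ) : Prop :=
  Differentiable ℝ u ∧ MemLp u 2 volume ∧ MemLp (px u) 2 volume ∧ MemLp (py u) 2 volume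

/-- The mass `M(u₊,u₋) = ‖u₊‖²_{L²} + ‖u₋‖²_{L²}`. -/
def mass (up um : Pt → ℂ) : ℝ := ∫ z : Pt, (‖up z‖ ^ 2 + ‖um z‖ ^ 2)

/-- The squared homogeneous Sobolev norm `‖(u₊,u₋)‖²_{Ḣ¹×Ḣ¹}`. -/
def hdot (up um : Pt → ℂ) : ℝ :=
  ∫ z : Pt, (‖px up z‖ ^ 2 + ‖py up z‖ ^ 2 + ‖px um z‖ ^ 2 + ‖py um z‖ ^ 2)

/-- The spin-orbit coupling term
`V_SO = (ν/2) Re ∫ (conj u₊ · D⁻u₋ - conj u₋ · D⁺u₊)`. -/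
def VSO (ν : ℝ) (up um : Pt → ℂ) : ℝ :=
  (ν / 2) * (∫ z : Pt, ((starRingEnd ℂ) (up z) * Dm um z -
      (starRingEnd ℂ) (um z) * Dp up z)).re

/-- The linear energy `E^lin`. -/
def Elin (ν : ℝ) (up um : Pt → ℂ) : ℝ :=
  (1 / 4) * (∫ z : Pt, (‖Dp up z‖ ^ 2 + ‖Dm um z‖ ^ 2)) + VSO ν up um

/-- The quartic nonlinear functional `N`. -/
def Nq (lp lm l0 : ℝ) (up um : Pt → ℂ) : ℝ :=
  (1 / 4) * ∫ z : Pt,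
    (lp * ‖up z‖ ^ 4 + lm * ‖um z‖ ^ 4 + 2 * l0 * ‖up z‖ ^ 2 * ‖um z‖ ^ 2)

/-- The total energy `E = E^lin - N`. -/
def energy (ν lp lm l0 : ℝ) (up um : Pt → ℂ) : ℝ :=
  Elin ν up um - Nq lp lm l0 up um

lemma memℒp_conj' {f : Pt → ℂ} (hf : MemLp f 2 volume) :
    MemLp (fun z => (starRingEnd ℂ) (f z)) 2 volume := by
  refine hf.of_le (continuous_star.comp_aestronglyMeasurable hf.aestronglyMeasurable) ?_
  filter_upwards with z; simp

lemma integrable_conj_mul {f g : Pt → ℂ} (hf : MemLp f 2 volume) (hg : MemLp g 2 volume) :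
    Integrable (fun z => (starRingEnd ℂ) (f z) * g z) volume := by
  rw [← memLp_one_iff_integrable]
  have h := hg.smul (memℒp_conj' hf) (r := 1) (hpqr := ⟨by norm_num [ENNReal.inv_two_add_inv_two]⟩)
  simpa [Pi.smul_apply', smul_eq_mul, Pi.mul_def] using h

lemma ptwise (a b u v : ℂ) (ν : ℝ) :
    (1/4:ℝ)*(‖a‖^2+‖b‖^2) + (ν/2)*(((starRingEnd ℂ) u * b).re - ((starRingEnd ℂ) v * a).re)
      + (ν^2/4)*(‖u‖^2+‖v‖^2)
    = (1/4)*(‖b + (ν:ℂ)*u‖^2 + ‖a - (ν:ℂ)*v‖^2) := by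
  simp only [Complex.sq_norm, Complex.normSq_apply, Complex.add_re,
    Complex.add_im, Complex.sub_re, Complex.sub_im, Complex.mul_re, Complex.mul_im,
    Complex.ofReal_re, Complex.ofReal_im, Complex.conj_re, Complex.conj_im]
  ring

theorem Elin_lower_bound (ν : ℝ) (hν : 0 < ν) (up um : Pt → ℂ) (hup : H1 up) (hum : H1 um) :
    0 ≤ Elin ν up um + (ν ^ 2 / 4) * mass up um := by
  -- Memℒp facts for Dp up and Dm um
  have hA2 : MemLp (fun z => Dp up z) 2 volume := by
    have h : (fun z => Dp up z) = (px up) + fun z => Complex.I * py up z := by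
      funext z; simp [Dp, Pi.add_apply]
    rw [h]; exact hup.2.2.1.add (hup.2.2.2.const_mul Complex.I)
  have hB2 : MemLp (fun z => Dm um z) 2 volume := by
    have h : (fun z => Dm um z) = (px um) - fun z => Complex.I * py um z := by
      funext z; simp [Dm, Pi.sub_apply]
    rw [h]; exact hum.2.2.1.sub (hum.2.2.2.const_mul Complex.I)
  -- integrability facts
  have iA : Integrable (fun z => ‖Dp up z‖^2) volume :=
    (memLp_two_iff_integrable_sq_norm hA2.aestronglyMeasurable).1 hA2
  have iB : Integrable (fun z => ‖Dm um z‖^2) volume :=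
    (memLp_two_iff_integrable_sq_norm hB2.aestronglyMeasurable).1 hB2
  have iu : Integrable (fun z => ‖up z‖^2) volume :=
    (memLp_two_iff_integrable_sq_norm hup.2.1.aestronglyMeasurable).1 hup.2.1
  have iv : Integrable (fun z => ‖um z‖^2) volume :=
    (memLp_two_iff_integrable_sq_norm hum.2.1.aestronglyMeasurable).1 hum.2.1
  have m1 : Integrable (fun z => (starRingEnd ℂ) (up z) * Dm um z) volume :=
    integrable_conj_mul hup.2.1 hB2
  have m2 : Integrable (fun z => (starRingEnd ℂ) (um z) * Dp up z) volume :=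
    integrable_conj_mul hum.2.1 hA2
  have hh : Integrable (fun z => (starRingEnd ℂ) (up z) * Dm um z -
      (starRingEnd ℂ) (um z) * Dp up z) volume := m1.sub m2
  -- move `re` inside the integral
  have hre : (∫ z : Pt, ((starRingEnd ℂ) (up z) * Dm um z -
        (starRingEnd ℂ) (um z) * Dp up z)).re
      = ∫ z : Pt, (((starRingEnd ℂ) (up z) * Dm um z).re -
        ((starRingEnd ℂ) (um z) * Dp up z).re) := by
    simpa [RCLike.re_to_complex, Complex.sub_re] using (integral_re hh).symm
  have ire : Integrable (fun z => (((starRingEnd ℂ) (up z) * Dm um z).re -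
      ((starRingEnd ℂ) (um z) * Dp up z).re)) volume := by
    have := hh.re
    simpa [Complex.sub_re] using this
  -- express LHS as a single integral
  have hsum :
      Elin ν up um + (ν ^ 2 / 4) * mass up um
      = ∫ z : Pt, ((1/4:ℝ)*(‖Dp up z‖^2+‖Dm um z‖^2)
          + (ν/2)*(((starRingEnd ℂ) (up z) * Dm um z).re -
              ((starRingEnd ℂ) (um z) * Dp up z).re)
          + (ν^2/4)*(‖up z‖^2+‖um z‖^2)) := by
    have it1 : Integrable (fun z : Pt => (1/4:ℝ)*(‖Dp up z‖^2+‖Dm um z‖^2)) volume := by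
      have h' : Integrable (fun z : Pt => ‖Dp up z‖^2+‖Dm um z‖^2) volume := iA.add iB
      exact h'.const_mul _
    have it2 : Integrable (fun z : Pt => (ν/2)*(((starRingEnd ℂ) (up z) * Dm um z).re -
        ((starRingEnd ℂ) (um z) * Dp up z).re)) volume := ire.const_mul _
    have it3 : Integrable (fun z : Pt => (ν^2/4)*(‖up z‖^2+‖um z‖^2)) volume := by
      have h' : Integrable (fun z : Pt => ‖up z‖^2+‖um z‖^2) volume := iu.add iv
      exact h'.const_mul _
    have it12 : Integrable (fun z : Pt => (1/4:ℝ)*(‖Dp up z‖^2+‖Dm um z‖^2)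
        + (ν/2)*(((starRingEnd ℂ) (up z) * Dm um z).re -
            ((starRingEnd ℂ) (um z) * Dp up z).re)) volume := it1.add it2
    rw [Elin, VSO, mass, hre, integral_add it12 it3, integral_add it1 it2,
      integral_const_mul, integral_const_mul, integral_const_mul]
  rw [hsum]
  refine integral_nonneg fun z => ?_
  simp only [Pi.zero_apply]
  have h := ptwise (Dp up z) (Dm um z) (up z) (um z) ν
  rw [h]
  positivity
end
end

section
/- Abstract scaling/sub-additivity: suppose E = Q − N with Q, N : V → ℝ functionals on a vector space V over ℝ, Q(t·u) = t² Q(u), N(t·u) = t⁴ N(u) for t > 0, N(u) > 0 for u ≠ 0, and M : V → ℝ with M(t·u) = t² M(u). Define ℰ(ρ) = inf{E(u) : M(u) = ρ} and assume ℰ(ρ) > −∞ for all ρ in (0, ρ*]. Then for all 0 < η < ρ ≤ ρ*, ℰ(ρ) ≤ ℰ(η) + ℰ(ρ−η); and if ℰ(η) is attained at some u with M(u) = η, then ℰ(ρ) < ℰ(η) + ℰ(ρ−η). -/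
noncomputable section

/-- `ℰ(σ) = inf {Q(u) - N(u) : M(u) = σ}`. -/
def EinfAbs {V : Type*} (Q N M : V → ℝ) (σ : ℝ) : ℝ :=
  sInf {e : ℝ | ∃ u : V, M u = σ ∧ e = Q u - N u}

theorem abstract_subadditivity {V : Type*} [AddCommGroup V] [Module ℝ V]
    (Q N M : V → ℝ) (ρstar : ℝ) (hρstar : 0 < ρstar)
    (hQ : ∀ t : ℝ, 0 < t → ∀ u : V, Q (t • u) = t ^ 2 * Q u)
    (hN : ∀ t : ℝ, 0 < t → ∀ u : V, N (t • u) = t ^ 4 * N u)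
    (hNpos : ∀ u : V, u ≠ 0 → 0 < N u)
    (hM : ∀ t : ℝ, 0 < t → ∀ u : V, M (t • u) = t ^ 2 * M u)
    (hne : ∀ ρ : ℝ, 0 < ρ → ρ ≤ ρstar → ∃ u : V, M u = ρ)
    (hbdd : ∀ ρ : ℝ, 0 < ρ → ρ ≤ ρstar →
      BddBelow {e : ℝ | ∃ u : V, M u = ρ ∧ e = Q u - N u}) :
    ∀ ρ η : ℝ, 0 < η → η < ρ → ρ ≤ ρstar →
      (EinfAbs Q N M ρ ≤ EinfAbs Q N M η + EinfAbs Q N M (ρ - η)) ∧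
      ((∃ u : V, M u = η ∧ Q u - N u = EinfAbs Q N M η) →
        EinfAbs Q N M ρ < EinfAbs Q N M η + EinfAbs Q N M (ρ - η)) := by
  have hM0 : M 0 = 0 := by
    have h := hM 2 (by norm_num) 0
    rw [smul_zero] at h
    linarith
  intro ρ η hη hηρ hρ
  have hρ0 : 0 < ρ := hη.trans hηρ
  have hρη : 0 < ρ - η := by linarith
  -- key strict inequality: for any u with M u = σ, 0 < σ < ρ,
  -- ℰ(ρ) < (ρ/σ) * (Q u - N u)
  have key : ∀ σ : ℝ, 0 < σ → σ < ρ → ∀ u : V, M u = σ →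
      EinfAbs Q N M ρ < (ρ / σ) * (Q u - N u) := by
    intro σ hσ hσρ u hu
    set θ : ℝ := ρ / σ with hθdef
    have hθ1 : 1 < θ := (one_lt_div hσ).2 hσρ
    have hθ0 : 0 < θ := by linarith
    set t : ℝ := Real.sqrt θ with htdef
    have ht0 : 0 < t := Real.sqrt_pos.2 hθ0
    have ht2 : t ^ 2 = θ := Real.sq_sqrt hθ0.le
    have ht4 : t ^ 4 = θ ^ 2 := by
      have : t ^ 4 = (t ^ 2) ^ 2 := by ring
      rw [this, ht2]
    have hu0 : u ≠ 0 := by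
      intro h; rw [h, hM0] at hu; linarith
    have hNu : 0 < N u := hNpos u hu0
    have hMv : M (t • u) = ρ := by
      rw [hM t ht0, ht2, hu, hθdef, div_mul_cancel₀ _ hσ.ne']
    have hEv : Q (t • u) - N (t • u) < θ * (Q u - N u) := by
      rw [hQ t ht0, hN t ht0, ht2, ht4]
      nlinarith [mul_pos (mul_pos hθ0 (by linarith : (0:ℝ) < θ - 1)) hNu]
    have hle : EinfAbs Q N M ρ ≤ Q (t • u) - N (t • u) :=
      csInf_le (hbdd ρ hρ0 hρ) ⟨t • u, hMv, rfl⟩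
    exact hle.trans_lt hEv
  -- non-strict scaling: ℰ(ρ) ≤ (ρ/σ) * ℰ(σ)
  have scale : ∀ σ : ℝ, 0 < σ → σ < ρ →
      EinfAbs Q N M ρ ≤ (ρ / σ) * EinfAbs Q N M σ := by
    intro σ hσ hσρ
    have hθ0 : 0 < ρ / σ := div_pos hρ0 hσ
    obtain ⟨w, hw⟩ := hne σ hσ (by linarith)
    have h2 : EinfAbs Q N M ρ / (ρ / σ) ≤ EinfAbs Q N M σ := by
      have hne' : {e : ℝ | ∃ u : V, M u = σ ∧ e = Q u - N u}.Nonempty :=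
        ⟨Q w - N w, w, hw, rfl⟩
      apply le_csInf hne'
      rintro e ⟨u, hu, rfl⟩
      exact (div_le_iff₀' hθ0).2 (key σ hσ hσρ u hu).le
    calc EinfAbs Q N M ρ = (ρ / σ) * (EinfAbs Q N M ρ / (ρ / σ)) := by
          field_simp
      _ ≤ (ρ / σ) * EinfAbs Q N M σ := by
          exact mul_le_mul_of_nonneg_left h2 hθ0.le
  have h1 := scale η hη hηρ
  have h2 := scale (ρ - η) hρη (by linarith)
  -- from h1 : ℰρ ≤ (ρ/η) ℰη, i.e. (η/ρ) ℰρ ≤ ℰη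
  have h1' : (η / ρ) * EinfAbs Q N M ρ ≤ EinfAbs Q N M η := by
    rw [div_mul_eq_mul_div, le_div_iff₀ hη] at h1
    rw [div_mul_eq_mul_div, div_le_iff₀ hρ0]
    nlinarith
  have h2' : ((ρ - η) / ρ) * EinfAbs Q N M ρ ≤ EinfAbs Q N M (ρ - η) := by
    rw [div_mul_eq_mul_div, le_div_iff₀ hρη] at h2
    rw [div_mul_eq_mul_div, div_le_iff₀ hρ0]
    nlinarith
  have hsum : (η / ρ) * EinfAbs Q N M ρ + ((ρ - η) / ρ) * EinfAbs Q N M ρ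
      = EinfAbs Q N M ρ := by field_simp; ring
  constructor
  · linarith
  · rintro ⟨u, hu, hEu⟩
    have h1s : EinfAbs Q N M ρ < (ρ / η) * EinfAbs Q N M η := by
      rw [← hEu]; exact key η hη hηρ u hu
    have h1s' : (η / ρ) * EinfAbs Q N M ρ < EinfAbs Q N M η := by
      rw [div_mul_eq_mul_div, lt_div_iff₀ hη] at h1s
      rw [div_mul_eq_mul_div, div_lt_iff₀ hρ0]
      nlinarith
    linarith
end
end

section
/- Suppose λ₊ = λ₋ = λ₀ = λ > 0, and suppose (Q₊, Q₋) = (e^{imθ}φ₊(r), e^{i(m+1)θ}φ₋(r)) solves the stationary system (1/2)ΔQ₊ − ωQ₊ = ν D⁻Q₋ − λ(|Q₊|² + |Q₋|²)Q₊ and (1/2)ΔQ₋ − ωQ₋ = −ν D⁺Q₊ − λ(|Q₋|² + |Q₊|²)Q₋ on ℝ². Then for every η ∈ [0,2π), the pair (f₊, f₋) with f₊ = cos η · Q₊ − sin η · e^{−i(m+1)θ} conj(φ₋(r)) and f₋ = cos η · Q₋ + sin η · e^{−imθ} conj(φ₊(r)) solves the same stationary system. -/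
open MeasureTheory Complex

noncomputable section

/-- The angular factor `e^{imθ} = ((x + iy)/r)^m` in polar coordinates. -/
def phase (m : ℤ) (z : Pt) : ℂ :=
  (((z.1 : ℂ) + (z.2 : ℂ) * Complex.I) / ((Real.sqrt (z.1 ^ 2 + z.2 ^ 2) : ℝ) : ℂ)) ^ m


/-! Auxiliary lemmas -/

lemma fd_comb' (a c : ℂ) (u v : Pt → ℂ) (z e : Pt) (hu : DifferentiableAt ℝ u z)
    (hv : DifferentiableAt ℝ v z) :
    fderiv ℝ (fun w => a * u w + c * v w) z e
      = a * fderiv ℝ u z e + c * fderiv ℝ v z e := by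
  rw [(show HasFDerivAt (fun w => a * u w + c * v w) _ z from
    (hu.hasFDerivAt.const_mul a).add (hv.hasFDerivAt.const_mul c)).fderiv]
  simp

lemma fd_conj' (u : Pt → ℂ) (z e : Pt) (hu : DifferentiableAt ℝ u z) :
    fderiv ℝ (fun w => (starRingEnd ℂ) (u w)) z e
      = (starRingEnd ℂ) (fderiv ℝ u z e) := by
  have h : HasFDerivAt (fun w => (starRingEnd ℂ) (u w))
      ((Complex.conjCLE.toContinuousLinearMap).comp (fderiv ℝ u z)) z :=
    Complex.conjCLE.toContinuousLinearMap.hasFDerivAt.comp z hu.hasFDerivAt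
  rw [h.fderiv]; rfl

lemma fd_F' (a c : ℂ) (u v : Pt → ℂ) (z e : Pt) (hu : DifferentiableAt ℝ u z)
    (hv : DifferentiableAt ℝ v z) :
    fderiv ℝ (fun w => a * u w + c * (starRingEnd ℂ) (v w)) z e
      = a * fderiv ℝ u z e + c * (starRingEnd ℂ) (fderiv ℝ v z e) := by
  rw [fd_comb' a c u (fun w => (starRingEnd ℂ) (v w)) z e hu
    ((Complex.conjCLE.toContinuousLinearMap.hasFDerivAt.comp z hv.hasFDerivAt).differentiableAt),
    fd_conj' v z e hv]

lemma diff_pd' (u : Pt → ℂ) (e : Pt) (hu : ContDiff ℝ 2 u) :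
    Differentiable ℝ (fun z => fderiv ℝ u z e) := by
  have h1 : ContDiff ℝ 1 (fderiv ℝ u) := hu.fderiv_right (by norm_num)
  exact ((ContinuousLinearMap.apply ℝ ℂ e).contDiff.comp h1).differentiable one_ne_zero

lemma px_F' (a c : ℂ) (u v : Pt → ℂ) (hu : Differentiable ℝ u) (hv : Differentiable ℝ v) :
    px (fun w => a * u w + c * (starRingEnd ℂ) (v w))
      = fun z => a * px u z + c * (starRingEnd ℂ) (px v z) := by
  funext z; exact fd_F' a c u v z (1,0) (hu z) (hv z)

lemma py_F' (a c : ℂ) (u v : Pt → ℂ) (hu : Differentiable ℝ u) (hv : Differentiable ℝ v) :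
    py (fun w => a * u w + c * (starRingEnd ℂ) (v w))
      = fun z => a * py u z + c * (starRingEnd ℂ) (py v z) := by
  funext z; exact fd_F' a c u v z (0,1) (hu z) (hv z)

lemma lap_F' (a c : ℂ) (u v : Pt → ℂ) (hu : ContDiff ℝ 2 u) (hv : ContDiff ℝ 2 v) (z : Pt) :
    lap (fun w => a * u w + c * (starRingEnd ℂ) (v w)) z
      = a * lap u z + c * (starRingEnd ℂ) (lap v z) := by
  have hud := hu.differentiable two_ne_zero
  have hvd := hv.differentiable two_ne_zero
  have hpxu : Differentiable ℝ (px u) := diff_pd' u (1,0) hu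
  have hpxv : Differentiable ℝ (px v) := diff_pd' v (1,0) hv
  have hpyu : Differentiable ℝ (py u) := diff_pd' u (0,1) hu
  have hpyv : Differentiable ℝ (py v) := diff_pd' v (0,1) hv
  unfold lap
  rw [px_F' a c u v hud hvd, py_F' a c u v hud hvd]
  have h1 : px (fun z => a * px u z + c * (starRingEnd ℂ) (px v z)) z
      = a * px (px u) z + c * (starRingEnd ℂ) (px (px v) z) :=
    fd_F' a c (px u) (px v) z (1,0) (hpxu z) (hpxv z)
  have h2 : py (fun z => a * py u z + c * (starRingEnd ℂ) (py v z)) z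
      = a * py (py u) z + c * (starRingEnd ℂ) (py (py v) z) :=
    fd_F' a c (py u) (py v) z (0,1) (hpyu z) (hpyv z)
  rw [h1, h2]; ring_nf
  simp [map_add]
  ring

lemma Dm_F' (a c : ℂ) (u v : Pt → ℂ) (hu : Differentiable ℝ u) (hv : Differentiable ℝ v)
    (z : Pt) :
    Dm (fun w => a * u w + c * (starRingEnd ℂ) (v w)) z
      = a * Dm u z + c * (starRingEnd ℂ) (Dp v z) := by
  unfold Dm Dp
  rw [px_F' a c u v hu hv, py_F' a c u v hu hv]
  simp [map_add, map_mul, Complex.conj_I]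
  ring

lemma Dp_F' (a c : ℂ) (u v : Pt → ℂ) (hu : Differentiable ℝ u) (hv : Differentiable ℝ v)
    (z : Pt) :
    Dp (fun w => a * u w + c * (starRingEnd ℂ) (v w)) z
      = a * Dp u z + c * (starRingEnd ℂ) (Dm v z) := by
  unfold Dm Dp
  rw [px_F' a c u v hu hv, py_F' a c u v hu hv]
  simp [map_add, map_mul, Complex.conj_I]
  ring

lemma norm_rot' (A S : ℝ) (hAS : A^2 + S^2 = 1) (p q : ℂ) :
    ‖(A:ℂ) * p - (S:ℂ) * (starRingEnd ℂ) q‖^2 + ‖(A:ℂ) * q + (S:ℂ) * (starRingEnd ℂ) p‖^2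
      = ‖p‖^2 + ‖q‖^2 := by
  simp only [Complex.sq_norm, Complex.normSq_apply, Complex.sub_re,
    Complex.sub_im, Complex.add_re, Complex.add_im, Complex.mul_re, Complex.mul_im,
    Complex.ofReal_re, Complex.ofReal_im, Complex.conj_re, Complex.conj_im]
  nlinarith [hAS, sq_nonneg p.re, sq_nonneg p.im]

theorem mixed_mode_solves (ν ω lam : ℝ) (hν : 0 < ν) (hlam : 0 < lam) (m : ℤ)
    (φp φm : ℝ → ℂ) (Qp Qm : Pt → ℂ)
    (hQp2 : ContDiff ℝ 2 Qp) (hQm2 : ContDiff ℝ 2 Qm)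
    (hform_p : ∀ z : Pt, z ≠ 0 → Qp z = phase m z * φp (Real.sqrt (z.1 ^ 2 + z.2 ^ 2)))
    (hform_m : ∀ z : Pt, z ≠ 0 → Qm z = phase (m + 1) z * φm (Real.sqrt (z.1 ^ 2 + z.2 ^ 2)))
    (heq : ∀ z : Pt,
      ((1 / 2) * lap Qp z - (ω : ℂ) * Qp z =
        (ν : ℂ) * Dm Qm z - ((lam * (‖Qp z‖ ^ 2 + ‖Qm z‖ ^ 2) : ℝ) : ℂ) * Qp z) ∧
      ((1 / 2) * lap Qm z - (ω : ℂ) * Qm z =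
        -(ν : ℂ) * Dp Qp z - ((lam * (‖Qm z‖ ^ 2 + ‖Qp z‖ ^ 2) : ℝ) : ℂ) * Qm z))
    (η : ℝ) (hη : η ∈ Set.Ico 0 (2 * Real.pi)) :
    ∀ z : Pt,
      ((1 / 2) * lap (fun w => (Real.cos η : ℂ) * Qp w -
            (Real.sin η : ℂ) * (starRingEnd ℂ) (Qm w)) z -
          (ω : ℂ) * ((Real.cos η : ℂ) * Qp z - (Real.sin η : ℂ) * (starRingEnd ℂ) (Qm z)) =
        (ν : ℂ) * Dm (fun w => (Real.cos η : ℂ) * Qm w +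
            (Real.sin η : ℂ) * (starRingEnd ℂ) (Qp w)) z -
          ((lam * (‖(Real.cos η : ℂ) * Qp z - (Real.sin η : ℂ) * (starRingEnd ℂ) (Qm z)‖ ^ 2 +
              ‖(Real.cos η : ℂ) * Qm z + (Real.sin η : ℂ) * (starRingEnd ℂ) (Qp z)‖ ^ 2) : ℝ) : ℂ) *
            ((Real.cos η : ℂ) * Qp z - (Real.sin η : ℂ) * (starRingEnd ℂ) (Qm z))) ∧
      ((1 / 2) * lap (fun w => (Real.cos η : ℂ) * Qm w +
            (Real.sin η : ℂ) * (starRingEnd ℂ) (Qp w)) z -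
          (ω : ℂ) * ((Real.cos η : ℂ) * Qm z + (Real.sin η : ℂ) * (starRingEnd ℂ) (Qp z)) =
        -(ν : ℂ) * Dp (fun w => (Real.cos η : ℂ) * Qp w -
            (Real.sin η : ℂ) * (starRingEnd ℂ) (Qm w)) z -
          ((lam * (‖(Real.cos η : ℂ) * Qm z + (Real.sin η : ℂ) * (starRingEnd ℂ) (Qp z)‖ ^ 2 +
              ‖(Real.cos η : ℂ) * Qp z - (Real.sin η : ℂ) * (starRingEnd ℂ) (Qm z)‖ ^ 2) : ℝ) : ℂ) *
            ((Real.cos η : ℂ) * Qm z + (Real.sin η : ℂ) * (starRingEnd ℂ) (Qp z))) := by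
  have hQpd := hQp2.differentiable two_ne_zero
  have hQmd := hQm2.differentiable two_ne_zero
  have eF : (fun w => (Real.cos η : ℂ) * Qp w - (Real.sin η : ℂ) * (starRingEnd ℂ) (Qm w))
      = fun w => (Real.cos η : ℂ) * Qp w + (-(Real.sin η : ℂ)) * (starRingEnd ℂ) (Qm w) := by
    funext w; ring
  intro z
  obtain ⟨h1, h2⟩ := heq z
  have h1c := congrArg (starRingEnd ℂ) h1
  have h2c := congrArg (starRingEnd ℂ) h2
  simp only [map_sub, map_mul, map_add, map_neg, Complex.conj_ofReal, map_one, map_div₀,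
    map_ofNat] at h1c h2c
  have hcomm : ((lam * (‖Qm z‖ ^ 2 + ‖Qp z‖ ^ 2) : ℝ) : ℂ)
      = ((lam * (‖Qp z‖ ^ 2 + ‖Qm z‖ ^ 2) : ℝ) : ℂ) := by push_cast; ring
  rw [hcomm] at h2 h2c
  have hAS : Real.cos η ^ 2 + Real.sin η ^ 2 = 1 := by
    nlinarith [Real.sin_sq_add_cos_sq η]
  have hnorm := norm_rot' (Real.cos η) (Real.sin η) hAS (Qp z) (Qm z)
  have hnorm2 : ‖(Real.cos η : ℂ) * Qm z + (Real.sin η : ℂ) * (starRingEnd ℂ) (Qp z)‖ ^ 2 +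
      ‖(Real.cos η : ℂ) * Qp z - (Real.sin η : ℂ) * (starRingEnd ℂ) (Qm z)‖ ^ 2
      = ‖Qm z‖ ^ 2 + ‖Qp z‖ ^ 2 := by linarith
  constructor
  · rw [eF, lap_F' _ _ Qp Qm hQp2 hQm2 z,
      Dm_F' ((Real.cos η : ℂ)) ((Real.sin η : ℂ)) Qm Qp hQmd hQpd z, hnorm]
    linear_combination (Real.cos η : ℂ) * h1 - (Real.sin η : ℂ) * h2c
  · rw [eF, lap_F' ((Real.cos η : ℂ)) ((Real.sin η : ℂ)) Qm Qp hQm2 hQp2 z,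
      Dp_F' _ _ Qp Qm hQpd hQmd z, hnorm2, hcomm]
    linear_combination (Real.cos η : ℂ) * h2 + (Real.sin η : ℂ) * h1c
end
end
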